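/- arXiv:1203.4956 — 2 statements merged into one kernel-verified Lean document; each statement's English description precedes it below -/
import Mathlib

section
/- Let n, m ≥ 1 be integers and let τₙ : Mₙ(ℂ) → Mₙ(ℂ) denote the transpose map. Then the operator norm of τₙ ⊗ id_{Mₘ} : Mₙ(ℂ) ⊗ Mₘ(ℂ) → Mₙ(ℂ) ⊗ Mₘ(ℂ) (with respect to the C*-norms) equals min(m, n). -/
/-!
Pairing `⟪x, (τₙ ⊗ id) X y⟫` splits into the `n²` pairings `⟪eⱼ ⊗ xᵢ, X (eᵢ ⊗ yⱼ)⟫` of the slices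
`xᵢ = x (i, ·)`, `yⱼ = y (j, ·)`; since `∑ᵢ ‖xᵢ‖ ≤ √n ‖x‖` by Cauchy–Schwarz, this gives
`‖(τₙ ⊗ id) X‖ ≤ n ‖X‖`. The map `τₙ ⊗ id` is the full transpose, an isometry, composed with
`id ⊗ τₘ`, which is `τₘ ⊗ id` conjugated by the tensor flip; hence also `‖(τₙ ⊗ id) X‖ ≤ m ‖X‖`.

For the lower bound let `k = min n m`, let `P` be the permutation matrix of the flip
`eᵢ ⊗ eₐ ↦ eₐ ⊗ eᵢ` on the `k × k` corner (identity elsewhere), so `‖P‖ ≤ 1`, and let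
`Ω = ∑_{i < k} eᵢ ⊗ eᵢ`. Then `⟪Ω, (τₙ ⊗ id) P Ω⟫ = k² = ‖Ω‖⁴`, so `‖(τₙ ⊗ id) P‖ ≥ k`.
-/

open scoped Kronecker
open Matrix
open scoped Matrix.Norms.L2Operator

open WithLp

namespace EuclideanSpace

variable {𝕜 : Type*} [RCLike 𝕜] {ι κ : Type*} [Fintype ι] [Fintype κ]

def slice (x : EuclideanSpace 𝕜 (ι × κ)) (i : ι) : EuclideanSpace 𝕜 κ :=
  toLp 2 fun a => x (i, a)

def embedSlice [DecidableEq ι] (i : ι) (v : EuclideanSpace 𝕜 κ) : EuclideanSpace 𝕜 (ι × κ) :=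
  toLp 2 fun p => if p.1 = i then v p.2 else 0

lemma norm_embedSlice [DecidableEq ι] (i : ι) (v : EuclideanSpace 𝕜 κ) :
    ‖embedSlice i v‖ = ‖v‖ := by
  simp [EuclideanSpace.norm_eq, embedSlice, Fintype.sum_prod_type, apply_ite]

lemma sum_norm_slice_sq (x : EuclideanSpace 𝕜 (ι × κ)) : ∑ i, ‖x.slice i‖ ^ 2 = ‖x‖ ^ 2 := by
  simp [EuclideanSpace.norm_sq_eq, slice, Fintype.sum_prod_type]

lemma sq_sum_norm_slice_le (x : EuclideanSpace 𝕜 (ι × κ)) :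
    (∑ i, ‖x.slice i‖) ^ 2 ≤ Fintype.card ι * ‖x‖ ^ 2 := by
  simpa [sum_norm_slice_sq] using
    sq_sum_le_card_mul_sum_sq (s := Finset.univ) (f := fun i => ‖x.slice i‖)

lemma norm_toLp_star (x : EuclideanSpace 𝕜 ι) : ‖toLp 2 fun i => star (x i)‖ = ‖x‖ := by
  simp [EuclideanSpace.norm_eq]

lemma norm_toLp_comp_equiv (e : κ ≃ ι) (x : EuclideanSpace 𝕜 ι) :
    ‖toLp 2 fun i => x (e i)‖ = ‖x‖ := by
  simp [EuclideanSpace.norm_eq, e.sum_comp fun i => ‖x i‖ ^ 2]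

end EuclideanSpace

namespace Matrix

open EuclideanSpace

section L2OpNorm

variable {𝕜 : Type*} [RCLike 𝕜] {ι κ : Type*} [Fintype ι] [Fintype κ] [DecidableEq ι]
  [DecidableEq κ]

lemma inner_toEuclideanCLM_eq (A : Matrix ι ι 𝕜) (x y : EuclideanSpace 𝕜 ι) :
    inner 𝕜 x (toEuclideanCLM (n := ι) (𝕜 := 𝕜) A y) = ∑ i, ∑ j, star (x i) * A i j * y j := by
  simp only [EuclideanSpace.inner_eq_star_dotProduct, ofLp_toEuclideanCLM, dotProduct, mulVec,
    Finset.sum_mul]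
  exact Finset.sum_congr rfl fun _ _ => Finset.sum_congr rfl fun _ _ => by simp; ring

lemma norm_inner_toEuclideanCLM_le (A : Matrix ι ι 𝕜) (x y : EuclideanSpace 𝕜 ι) :
    ‖inner 𝕜 x (toEuclideanCLM (n := ι) (𝕜 := 𝕜) A y)‖ ≤ ‖A‖ * ‖x‖ * ‖y‖ :=
  calc _ ≤ ‖x‖ * ‖toEuclideanCLM (n := ι) (𝕜 := 𝕜) A y‖ := norm_inner_le_norm _ _
    _ ≤ ‖x‖ * (‖A‖ * ‖y‖) := by gcongr; exact (toEuclideanCLM (n := ι) (𝕜 := 𝕜) A).le_opNorm y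
    _ = _ := by ring

lemma l2_opNorm_le_of_inner {A : Matrix ι ι 𝕜} {c : ℝ} (hc : 0 ≤ c)
    (h : ∀ x y : EuclideanSpace 𝕜 ι,
      ‖inner 𝕜 x (toEuclideanCLM (n := ι) (𝕜 := 𝕜) A y)‖ ≤ c * ‖x‖ * ‖y‖) :
    ‖A‖ ≤ c := by
  refine (toEuclideanCLM (n := ι) (𝕜 := 𝕜) A).opNorm_le_bound hc fun y => ?_
  have h' := h (toEuclideanCLM (n := ι) (𝕜 := 𝕜) A y) y
  rw [inner_self_eq_norm_sq_to_K, norm_pow, RCLike.norm_ofReal, abs_norm, sq] at h'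
  rcases (norm_nonneg (toEuclideanCLM (n := ι) (𝕜 := 𝕜) A y)).eq_or_lt with h0 | h0
  · rw [← h0]; positivity
  · nlinarith

lemma l2_opNorm_transpose_le (A : Matrix ι ι 𝕜) : ‖Aᵀ‖ ≤ ‖A‖ := by
  refine l2_opNorm_le_of_inner (norm_nonneg A) fun x y => ?_
  have h := norm_inner_toEuclideanCLM_le A (toLp 2 fun i => star (y i))
    (toLp 2 fun i => star (x i))
  rw [norm_toLp_star, norm_toLp_star, inner_toEuclideanCLM_eq, Finset.sum_comm] at h
  rw [inner_toEuclideanCLM_eq]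
  refine (le_of_eq ?_).trans (h.trans_eq (by ring))
  congr 1
  exact Finset.sum_congr rfl fun _ _ => Finset.sum_congr rfl fun _ _ => by simp; ring

lemma l2_opNorm_transpose (A : Matrix ι ι 𝕜) : ‖Aᵀ‖ = ‖A‖ :=
  le_antisymm (l2_opNorm_transpose_le A) (by simpa using l2_opNorm_transpose_le Aᵀ)

lemma l2_opNorm_reindex_le (e : ι ≃ κ) (A : Matrix ι ι 𝕜) : ‖reindex e e A‖ ≤ ‖A‖ := by
  refine l2_opNorm_le_of_inner (norm_nonneg A) fun x y => ?_
  have h := norm_inner_toEuclideanCLM_le A (toLp 2 fun i => x (e i)) (toLp 2 fun i => y (e i))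
  rw [norm_toLp_comp_equiv, norm_toLp_comp_equiv, inner_toEuclideanCLM_eq] at h
  rw [inner_toEuclideanCLM_eq, ← e.sum_comp]
  refine (le_of_eq ?_).trans h
  congr 1
  exact Finset.sum_congr rfl fun i _ => by rw [← e.sum_comp]; simp

lemma l2_opNorm_reindex (e : ι ≃ κ) (A : Matrix ι ι 𝕜) : ‖reindex e e A‖ = ‖A‖ :=
  le_antisymm (l2_opNorm_reindex_le e A)
    (by simpa using l2_opNorm_reindex_le e.symm (reindex e e A))

end L2OpNorm

section PartialTranspose

variable {𝕜 : Type*} [RCLike 𝕜] {ι κ : Type*}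

variable (𝕜 ι κ) in
def partialTranspose : Matrix (ι × κ) (ι × κ) 𝕜 →ₗ[𝕜] Matrix (ι × κ) (ι × κ) 𝕜 where
  toFun X := of fun p q => X (q.1, p.2) (p.1, q.2)
  map_add' _ _ := rfl
  map_smul' _ _ := rfl

lemma partialTranspose_apply (X : Matrix (ι × κ) (ι × κ) 𝕜) (p q : ι × κ) :
    partialTranspose 𝕜 ι κ X p q = X (q.1, p.2) (p.1, q.2) := rfl

lemma partialTranspose_kronecker (A : Matrix ι ι 𝕜) (B : Matrix κ κ 𝕜) :
    partialTranspose 𝕜 ι κ (A ⊗ₖ B) = Aᵀ ⊗ₖ B := rfl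

lemma partialTranspose_eq_transpose_reindex (X : Matrix (ι × κ) (ι × κ) 𝕜) :
    partialTranspose 𝕜 ι κ X =
      (reindex (Equiv.prodComm ι κ).symm (Equiv.prodComm ι κ).symm
        (partialTranspose 𝕜 κ ι (reindex (Equiv.prodComm ι κ) (Equiv.prodComm ι κ) X)))ᵀ :=
  rfl

variable [Fintype ι] [Fintype κ] [DecidableEq ι] [DecidableEq κ]

lemma eq_partialTranspose_of_kronecker
    {T : Matrix (ι × κ) (ι × κ) 𝕜 →ₗ[𝕜] Matrix (ι × κ) (ι × κ) 𝕜}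
    (hT : ∀ (A : Matrix ι ι 𝕜) (B : Matrix κ κ 𝕜), T (A ⊗ₖ B) = Aᵀ ⊗ₖ B) :
    T = partialTranspose 𝕜 ι κ := by
  refine ext_linearMap _ fun p q => LinearMap.ext_ring ?_
  rw [LinearMap.comp_apply, LinearMap.comp_apply, singleLinearMap_apply, ← mul_one (1 : 𝕜),
    ← single_kronecker_single, hT, partialTranspose_kronecker, transpose_single]

lemma inner_partialTranspose_eq_sum (X : Matrix (ι × κ) (ι × κ) 𝕜)
    (x y : EuclideanSpace 𝕜 (ι × κ)) :
    inner 𝕜 x (toEuclideanCLM (n := ι × κ) (𝕜 := 𝕜) (partialTranspose 𝕜 ι κ X) y) =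
      ∑ i, ∑ j, inner 𝕜 (embedSlice j (x.slice i))
        (toEuclideanCLM (n := ι × κ) (𝕜 := 𝕜) X (embedSlice i (y.slice j))) := by
  simp_rw [inner_toEuclideanCLM_eq]
  simp [partialTranspose_apply, embedSlice, slice, Fintype.sum_prod_type, apply_ite, ite_mul,
    Finset.sum_ite_irrel]
  exact Finset.sum_congr rfl fun _ _ => Finset.sum_comm

lemma l2_opNorm_partialTranspose_le_card_left (X : Matrix (ι × κ) (ι × κ) 𝕜) :
    ‖partialTranspose 𝕜 ι κ X‖ ≤ Fintype.card ι * ‖X‖ := by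
  refine l2_opNorm_le_of_inner (by positivity) fun x y => ?_
  have hcs : (∑ i, ‖x.slice i‖) * (∑ j, ‖y.slice j‖) ≤ Fintype.card ι * (‖x‖ * ‖y‖) := by
    refine (pow_le_pow_iff_left₀ (by positivity) (by positivity) two_ne_zero).1 ?_
    calc _ = (∑ i, ‖x.slice i‖) ^ 2 * (∑ j, ‖y.slice j‖) ^ 2 := mul_pow ..
      _ ≤ (Fintype.card ι * ‖x‖ ^ 2) * (Fintype.card ι * ‖y‖ ^ 2) := by
          gcongr <;> exact sq_sum_norm_slice_le _
      _ = _ := by ring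
  rw [inner_partialTranspose_eq_sum]
  calc _ ≤ ∑ i, ∑ j, ‖X‖ * ‖x.slice i‖ * ‖y.slice j‖ := by
        refine (norm_sum_le _ _).trans (Finset.sum_le_sum fun i _ => (norm_sum_le _ _).trans
          (Finset.sum_le_sum fun j _ => ?_))
        have h := norm_inner_toEuclideanCLM_le X (embedSlice j (x.slice i))
          (embedSlice i (y.slice j))
        rwa [norm_embedSlice, norm_embedSlice] at h
    _ = ‖X‖ * ((∑ i, ‖x.slice i‖) * (∑ j, ‖y.slice j‖)) := by
        simp_rw [Finset.sum_mul_sum, Finset.mul_sum, mul_assoc]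
    _ ≤ ‖X‖ * (Fintype.card ι * (‖x‖ * ‖y‖)) := by gcongr
    _ = _ := by ring

lemma l2_opNorm_partialTranspose_le_card_right (X : Matrix (ι × κ) (ι × κ) 𝕜) :
    ‖partialTranspose 𝕜 ι κ X‖ ≤ Fintype.card κ * ‖X‖ := by
  rw [partialTranspose_eq_transpose_reindex, l2_opNorm_transpose, l2_opNorm_reindex,
    ← l2_opNorm_reindex (Equiv.prodComm ι κ) X]
  exact l2_opNorm_partialTranspose_le_card_left _

end PartialTranspose

end Matrix

namespace Fin

variable {n m : ℕ}

def cornerFlip (n m : ℕ) : Equiv.Perm (Fin n × Fin m) :=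
  Function.Involutive.toPerm
    (fun p => if h : (p.1 : ℕ) < m ∧ (p.2 : ℕ) < n then (⟨p.2, h.2⟩, ⟨p.1, h.1⟩) else p)
    (fun p => by by_cases h : (p.1 : ℕ) < m ∧ (p.2 : ℕ) < n <;> simp [h])

lemma cornerFlip_apply_of_lt {p : Fin n × Fin m} (h1 : (p.1 : ℕ) < m) (h2 : (p.2 : ℕ) < n) :
    cornerFlip n m p = (⟨p.2, h2⟩, ⟨p.1, h1⟩) :=
  dif_pos ⟨h1, h2⟩

open Finset in
lemma card_filter_val_fst_eq_val_snd : #{p : Fin n × Fin m | (p.1 : ℕ) = p.2} = min n m := by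
  have row (i : Fin n) :
      ∑ a : Fin m, (if (i : ℕ) = a then 1 else 0) = if (i : ℕ) < m then 1 else 0 := by
    split_ifs with h
    · rw [Finset.sum_eq_single ⟨i, h⟩ (fun a _ ha => if_neg fun h' => ha (Fin.ext h'.symm))
        (by simp)]
      simp
    · exact Finset.sum_eq_zero fun a _ => if_neg (by omega)
  rw [Finset.card_filter, Fintype.sum_prod_type]
  simp_rw [row, ← Finset.card_filter, Fin.card_filter_val_lt]

end Fin

namespace EuclideanSpace

variable (𝕜 : Type*) [RCLike 𝕜] (n m : ℕ)

def maxEntangled : EuclideanSpace 𝕜 (Fin n × Fin m) :=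
  toLp 2 fun p => if (p.1 : ℕ) = p.2 then 1 else 0

lemma norm_maxEntangled_sq : ‖maxEntangled 𝕜 n m‖ ^ 2 = (min n m : ℕ) := by
  simp [EuclideanSpace.norm_sq_eq, maxEntangled, apply_ite, Fin.card_filter_val_fst_eq_val_snd]

end EuclideanSpace

namespace Matrix

open EuclideanSpace

variable {𝕜 : Type*} [RCLike 𝕜] {n m : ℕ}

lemma partialTranspose_cornerFlip_apply_of_diag {p q : Fin n × Fin m} (hp : (p.1 : ℕ) = p.2)
    (hq : (q.1 : ℕ) = q.2) :
    partialTranspose 𝕜 _ _ ((Fin.cornerFlip n m).permMatrix 𝕜) p q = 1 := by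
  have hflip : Fin.cornerFlip n m (q.1, p.2) = (p.1, q.2) := by
    rw [Fin.cornerFlip_apply_of_lt (by simp [hq]) (by simp [← hp])]
    ext <;> simp [hp, hq]
  simp [partialTranspose_apply, PEquiv.toMatrix_apply, hflip]

lemma inner_maxEntangled_partialTranspose_cornerFlip :
    inner 𝕜 (maxEntangled 𝕜 n m) (toEuclideanCLM (n := Fin n × Fin m) (𝕜 := 𝕜)
      (partialTranspose 𝕜 _ _ ((Fin.cornerFlip n m).permMatrix 𝕜)) (maxEntangled 𝕜 n m)) =
      ((min n m : ℕ) : 𝕜) ^ 2 := by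
  have term (p q : Fin n × Fin m) :
      star (maxEntangled 𝕜 n m p) *
          partialTranspose 𝕜 _ _ ((Fin.cornerFlip n m).permMatrix 𝕜) p q * maxEntangled 𝕜 n m q =
        maxEntangled 𝕜 n m p * maxEntangled 𝕜 n m q := by
    by_cases hp : (p.1 : ℕ) = p.2
    · by_cases hq : (q.1 : ℕ) = q.2
      · simp [maxEntangled, hp, hq, partialTranspose_cornerFlip_apply_of_diag hp hq]
      · simp [maxEntangled, hq]
    · simp [maxEntangled, hp]
  simp_rw [inner_toEuclideanCLM_eq, term, ← Finset.sum_mul_sum, ← sq]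
  simp [maxEntangled, Finset.sum_boole, Fin.card_filter_val_fst_eq_val_snd]

lemma min_le_l2_opNorm_partialTranspose_cornerFlip :
    ((min n m : ℕ) : ℝ) ≤ ‖partialTranspose 𝕜 _ _ ((Fin.cornerFlip n m).permMatrix 𝕜)‖ := by
  have h := norm_inner_toEuclideanCLM_le
    (partialTranspose 𝕜 _ _ ((Fin.cornerFlip n m).permMatrix 𝕜)) (maxEntangled 𝕜 n m)
    (maxEntangled 𝕜 n m)
  rw [inner_maxEntangled_partialTranspose_cornerFlip, mul_assoc, ← sq, norm_maxEntangled_sq,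
    norm_pow, RCLike.norm_natCast, sq] at h
  rcases Nat.eq_zero_or_pos (min n m) with h0 | h0
  · rw [h0, Nat.cast_zero]
    exact norm_nonneg _
  · exact le_of_mul_le_mul_right h (by exact_mod_cast h0)

theorem norm_toContinuousLinearMap_partialTranspose :
    ‖LinearMap.toContinuousLinearMap (partialTranspose 𝕜 (Fin n) (Fin m))‖ = min (n : ℝ) m := by
  refine le_antisymm (ContinuousLinearMap.opNorm_le_bound _ (by positivity) fun X => ?_) ?_
  · rw [LinearMap.coe_toContinuousLinearMap', min_mul_of_nonneg _ _ (norm_nonneg X)]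
    exact le_min (by simpa using l2_opNorm_partialTranspose_le_card_left X)
      (by simpa using l2_opNorm_partialTranspose_le_card_right X)
  · set P := (Fin.cornerFlip n m).permMatrix 𝕜
    calc min (n : ℝ) m = ((min n m : ℕ) : ℝ) := (Nat.cast_min n m).symm
      _ ≤ ‖partialTranspose 𝕜 _ _ P‖ := min_le_l2_opNorm_partialTranspose_cornerFlip
      _ ≤ ‖LinearMap.toContinuousLinearMap (partialTranspose 𝕜 (Fin n) (Fin m))‖ * ‖P‖ :=
          (LinearMap.toContinuousLinearMap (partialTranspose 𝕜 (Fin n) (Fin m))).le_opNorm P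
      _ ≤ _ := mul_le_of_le_one_right (norm_nonneg _) (permMatrix_l2_opNorm_le _)

end Matrix

theorem stmt0_general (n m : ℕ)
    (T : Matrix (Fin n × Fin m) (Fin n × Fin m) ℂ →ₗ[ℂ]
         Matrix (Fin n × Fin m) (Fin n × Fin m) ℂ)
    (hT : ∀ (A : Matrix (Fin n) (Fin n) ℂ) (B : Matrix (Fin m) (Fin m) ℂ),
      T (A ⊗ₖ B) = Aᵀ ⊗ₖ B) :
    ‖LinearMap.toContinuousLinearMap T‖ = min (m : ℝ) (n : ℝ) := by
  rw [eq_partialTranspose_of_kronecker hT, norm_toContinuousLinearMap_partialTranspose, min_comm]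

/-- Let `n, m ≥ 1` and let `T` be the linear map
`τₙ ⊗ id : Mₙ(ℂ) ⊗ Mₘ(ℂ) → Mₙ(ℂ) ⊗ Mₘ(ℂ)`, characterised on Kronecker products by
`T (A ⊗ₖ B) = Aᵀ ⊗ₖ B`.  Then the operator norm of `T` (with respect to the C*-norm,
i.e. the L2-operator norm on matrices) equals `min m n`. -/
theorem stmt0 (n m : ℕ) (hn : 1 ≤ n) (hm : 1 ≤ m)
    (T : Matrix (Fin n × Fin m) (Fin n × Fin m) ℂ →ₗ[ℂ]
         Matrix (Fin n × Fin m) (Fin n × Fin m) ℂ)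
    (hT : ∀ (A : Matrix (Fin n) (Fin n) ℂ) (B : Matrix (Fin m) (Fin m) ℂ),
      T (A ⊗ₖ B) = Aᵀ ⊗ₖ B) :
    ‖LinearMap.toContinuousLinearMap T‖ = min (m : ℝ) (n : ℝ) :=
  stmt0_general n m T hT
end

section
/- Let A be a unital C*-algebra. Suppose there exist nets of contractive positive linear maps φ_α : A → F_α and ψ_α : F_α → A, with each F_α a finite-dimensional abelian C*-algebra, such that ‖x − ψ_α(φ_α(x))‖ → 0 for all x ∈ A. Then A is abelian (commutative). -/
/-!
Every `ψ ∘ φ` factors through a finite-dimensional commutative C*-algebra `F ≅ ℂⁿ`, so it has the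
form `x ↦ ∑ ωₖ(x) eₖ` with positive functionals `ωₖ` of norm at most one and positive `eₖ` with
`∑ eₖ ≤ 1`. An operator Cauchy–Schwarz inequality for such sums and the Cauchy–Schwarz inequality
`|ωₖ(z)|² ≤ ωₖ(z⋆z)` give `ψ(φ z) ψ(φ z)⋆ ≤ ψ(φ (z⋆z))`. Passing to the limit along the net,
`z z⋆ ≤ z⋆z` for every `z`; applied also to `z⋆` this makes every element normal, and a
`⋆`-algebra over `ℂ` in which every element is normal is commutative, since `a + I • b` is normal
for self-adjoint `a`, `b` exactly when `a` and `b` commute.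
-/

noncomputable section

open Filter Topology

/-- An element of a `*`-ring is positive if it is of the form `star b * b`. -/
def IsPosElem {A : Type*} [NonUnitalSemiring A] [StarRing A] (a : A) : Prop :=
  ∃ b, a = star b * b

/-- A net (indexed by a nonempty directed preorder) of finite-dimensional *abelian*
C*-algebras `F i` and contractive positive linear maps `φ i : A → F i`, `ψ i : F i → A`
such that `‖x - ψ i (φ i x)‖ → 0` for every `x ∈ A`. -/
structure AbelianApproxNet (A : Type) [CStarAlgebra A] where
  ι : Type
  [pre : Preorder ι]
  [ne : Nonempty ι]
  directed : ∀ a b : ι, ∃ c, a ≤ c ∧ b ≤ c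
  F : ι → Type
  [instF : ∀ i, CStarAlgebra (F i)]
  findim : ∀ i, FiniteDimensional ℂ (F i)
  abelian : ∀ i, ∀ x y : F i, x * y = y * x
  φ : ∀ i, A →ₗ[ℂ] F i
  φ_contr : ∀ i, ∀ x, ‖φ i x‖ ≤ ‖x‖
  φ_pos : ∀ i, ∀ a : A, IsPosElem a → IsPosElem (φ i a)
  ψ : ∀ i, F i →ₗ[ℂ] A
  ψ_contr : ∀ i, ∀ y, ‖ψ i y‖ ≤ ‖y‖
  ψ_pos : ∀ i, ∀ y : F i, IsPosElem y → IsPosElem (ψ i y)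
  approx : ∀ x : A, Filter.Tendsto (fun i => ‖x - ψ i (φ i x)‖) Filter.atTop (𝓝 0)

open scoped ComplexOrder
open Complex WeakDual

theorem isPosElem_iff_nonneg {A : Type*} [NonUnitalCStarAlgebra A] [PartialOrder A]
    [StarOrderedRing A] {a : A} : IsPosElem a ↔ 0 ≤ a :=
  CStarAlgebra.nonneg_iff_eq_star_mul_self.symm

theorem CStarRing.norm_one_le {E : Type*} [NormedRing E] [StarRing E] [CStarRing E] :
    ‖(1 : E)‖ ≤ 1 := by
  nontriviality E
  exact CStarRing.norm_one.le

instance WeakDual.CharacterSpace.finite {𝕜 A : Type*} [Field 𝕜] [TopologicalSpace 𝕜]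
    [IsTopologicalRing 𝕜] [TopologicalSpace A] [Ring A] [Algebra 𝕜 A] [FiniteDimensional 𝕜 A] :
    Finite (characterSpace 𝕜 A) :=
  Finite.of_injective CharacterSpace.toAlgHom fun χ χ' h ↦ by ext a; exact congr($h a)

/-- Through the Gelfand transform `F ≅ C(characterSpace ℂ F, ℂ)`, the `p χ` are the indicator
functions of the points `χ`. -/
theorem WeakDual.CharacterSpace.exists_isStarProjection_sum_smul_eq (F : Type*)
    [CommCStarAlgebra F] [Fintype (characterSpace ℂ F)] :
    ∃ p : characterSpace ℂ F → F, (∀ χ, IsStarProjection (p χ)) ∧ ∀ f, ∑ χ, χ f • p χ = f := by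
  classical
  let G := gelfandStarTransform F
  let δ : characterSpace ℂ F → C(characterSpace ℂ F, ℂ) := fun χ ↦
    ⟨fun χ' ↦ if χ' = χ then 1 else 0, continuous_of_discreteTopology⟩
  refine ⟨fun χ ↦ G.symm (δ χ), fun χ ↦ IsStarProjection.map ⟨?_, ?_⟩ G.symm, fun f ↦ ?_⟩
  · ext χ'; by_cases h : χ' = χ <;> simp [δ, h]
  · ext χ'; by_cases h : χ' = χ <;> simp [δ, h]
  · have hG : G f = ∑ χ, χ f • δ χ := by ext χ'; simp [δ, G]
    conv_rhs => rw [← G.symm_apply_apply f, hG, map_sum]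
    simp only [map_smul]

section CauchySchwarz

variable {A : Type*} [CStarAlgebra A] [PartialOrder A] [StarOrderedRing A]

/-- Cauchy–Schwarz in the GNS space of `ω`, applied to the vectors `1` and `z`. -/
theorem PositiveLinearMap.star_apply_mul_apply_le (ω : A →ₚ[ℂ] ℂ) (hω : ‖ω 1‖ ≤ 1) (z : A) :
    star (ω z) * ω z ≤ ω (star z * z) := by
  have hcs := norm_inner_le_norm (𝕜 := ℂ) (ω.toPreGNS 1) (ω.toPreGNS z)
  have h1 := ω.preGNS_norm_sq (ω.toPreGNS 1)
  have hz := ω.preGNS_norm_sq (ω.toPreGNS z)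
  simp only [preGNS_inner_def, ofPreGNS_toPreGNS, star_one, one_mul] at hcs h1 hz
  rw [← h1] at hω
  rw [← hz, Complex.star_def, Complex.conj_mul']
  norm_cast at hω ⊢
  simp only [norm_pow, norm_norm, sq_le_one_iff₀ (norm_nonneg _)] at hω
  gcongr
  exact hcs.trans (mul_le_of_le_one_left (norm_nonneg _) hω)

/-- With `e i = star (g i) * g i` and `z = ∑ i, t i • e i`, the difference of the two sides is
`∑ i, star (t i • g i - g i * z) * (t i • g i - g i * z) + star z * (1 - ∑ i, e i) * z`. -/
theorem star_sum_smul_mul_sum_smul_le {ι : Type*} [Fintype ι] {e : ι → A} (he : ∀ i, 0 ≤ e i)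
    (he_sum : ∑ i, e i ≤ 1) (t : ι → ℂ) :
    star (∑ i, t i • e i) * ∑ i, t i • e i ≤ ∑ i, (star (t i) * t i) • e i := by
  set z := ∑ i, t i • e i
  choose g hg using fun i ↦ CStarAlgebra.nonneg_iff_eq_star_mul_self.mp (he i)
  have hz_star : star z = ∑ i, star (t i) • e i := by
    simp only [z, star_sum, star_smul, (he _).isSelfAdjoint.star_eq]
  have hterm (i : ι) : star (t i • g i - g i * z) * (t i • g i - g i * z) =
      (star (t i) * t i) • e i - star (t i) • e i * z - star z * (t i • e i)
        + star z * e i * z := by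
    simp only [hg, star_sub, star_smul, star_mul, sub_mul, mul_sub, smul_mul_assoc,
      mul_smul_comm, smul_smul, mul_assoc, smul_sub]
    module
  have hsum : ∑ i, star (t i • g i - g i * z) * (t i • g i - g i * z) =
      (∑ i, (star (t i) * t i) • e i - star z * z) - (star z * z - star z * (∑ i, e i) * z) := by
    simp only [hterm, Finset.sum_add_distrib, Finset.sum_sub_distrib, ← Finset.sum_mul,
      ← Finset.mul_sum, ← hz_star, show ∑ i, t i • e i = z from rfl]
    abel
  have hsq : 0 ≤ ∑ i, star (t i • g i - g i * z) * (t i • g i - g i * z) :=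
    Finset.sum_nonneg fun i _ ↦ star_mul_self_nonneg _
  have hcontr : star z * (∑ i, e i) * z ≤ star z * z := by
    simpa using star_left_conjugate_le_conjugate he_sum z
  rw [hsum, sub_nonneg] at hsq
  exact sub_nonneg.mp ((sub_nonneg.mpr hcontr).trans hsq)

theorem PositiveLinearMap.comp_apply_mul_star_le {F : Type*} [CommCStarAlgebra F]
    [PartialOrder F] [StarOrderedRing F] [FiniteDimensional ℂ F] (φ : A →ₚ[ℂ] F)
    (ψ : F →ₚ[ℂ] A) (hφ : ‖φ 1‖ ≤ 1) (hψ : ψ 1 ≤ 1) (z : A) :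
    ψ (φ z) * star (ψ (φ z)) ≤ ψ (φ (star z * z)) := by
  classical
  have := Fintype.ofFinite (characterSpace ℂ F)
  obtain ⟨p, hp, hsum⟩ := CharacterSpace.exists_isStarProjection_sum_smul_eq F
  let ω : characterSpace ℂ F → A →ₚ[ℂ] ℂ := fun χ ↦ (PositiveLinearMap.ofClass χ).comp φ
  have hθ (x : A) : ψ (φ x) = ∑ χ, ω χ x • ψ (p χ) := by
    conv_lhs => rw [← hsum (φ x), map_sum]
    simp only [map_smul]
    rfl
  have hω (χ : characterSpace ℂ F) : ‖ω χ 1‖ ≤ 1 :=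
    (NonUnitalStarAlgHom.norm_apply_le χ (φ 1)).trans hφ
  have he (χ : characterSpace ℂ F) : 0 ≤ ψ (p χ) := ψ.map_nonneg (hp χ).nonneg
  have he_sum : ∑ χ, ψ (p χ) ≤ 1 := by
    have hp_sum : ∑ χ, p χ = 1 := by simpa using hsum 1
    rwa [← map_sum, hp_sum]
  calc ψ (φ z) * star (ψ (φ z))
      = star (∑ χ, star (ω χ z) • ψ (p χ)) * ∑ χ, star (ω χ z) • ψ (p χ) := by
        simp only [hθ z, star_sum, star_smul, star_star, (he _).isSelfAdjoint.star_eq]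
    _ ≤ ∑ χ, (star (star (ω χ z)) * star (ω χ z)) • ψ (p χ) :=
        star_sum_smul_mul_sum_smul_le he he_sum _
    _ ≤ ∑ χ, ω χ (star z * z) • ψ (p χ) := by
        gcongr with χ
        · exact he χ
        · rw [star_star, mul_comm]
          exact (ω χ).star_apply_mul_apply_le (hω χ) z
    _ = ψ (φ (star z * z)) := (hθ _).symm

end CauchySchwarz

theorem commute_of_forall_isStarNormal {A : Type*} [NonUnitalNonAssocRing A] [StarRing A]
    [Module ℂ A] [IsScalarTower ℂ A A] [SMulCommClass ℂ A A] [StarModule ℂ A]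
    (h : ∀ x : A, IsStarNormal x) (x y : A) : Commute x y := by
  have hsa (a b : selfAdjoint A) : Commute (a : A) b := by
    simpa [realPart_I_smul, imaginaryPart_I_smul] using
      isStarNormal_iff_commute_realPart_imaginaryPart.mp (h (a + I • b))
  rw [← realPart_add_I_smul_imaginaryPart x, ← realPart_add_I_smul_imaginaryPart y]
  exact ((hsa _ _).add_right ((hsa _ _).smul_right I)).add_left
    (((hsa _ _).add_right ((hsa _ _).smul_right I)).smul_left I)

theorem AbelianApproxNet.mul_star_le_star_mul {A : Type} [CStarAlgebra A] [PartialOrder A]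
    [StarOrderedRing A] (N : AbelianApproxNet A) (z : A) : z * star z ≤ star z * z := by
  let := N.pre
  have := N.ne
  let := N.instF
  have : IsDirected N.ι (· ≤ ·) := ⟨N.directed⟩
  have happrox (x : A) : Tendsto (fun i ↦ N.ψ i (N.φ i x)) atTop (𝓝 x) :=
    tendsto_iff_norm_sub_tendsto_zero.mpr (by simpa [norm_sub_rev] using N.approx x)
  refine le_of_tendsto_of_tendsto' ((happrox z).mul (happrox z).star)
    (happrox (star z * z)) fun i ↦ ?_
  let : CommCStarAlgebra (N.F i) := { N.instF i with mul_comm := N.abelian i }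
  let : PartialOrder (N.F i) := CStarAlgebra.spectralOrder _
  have : StarOrderedRing (N.F i) := CStarAlgebra.spectralOrderedRing _
  have := N.findim i
  let φ : A →ₚ[ℂ] N.F i := .mk₀ (N.φ i) fun a ha ↦
    isPosElem_iff_nonneg.mp (N.φ_pos i a (isPosElem_iff_nonneg.mpr ha))
  let ψ : N.F i →ₚ[ℂ] A := .mk₀ (N.ψ i) fun a ha ↦
    isPosElem_iff_nonneg.mp (N.ψ_pos i a (isPosElem_iff_nonneg.mpr ha))
  have hφ : ‖φ 1‖ ≤ 1 := (N.φ_contr i 1).trans CStarRing.norm_one_le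
  have hψ : ψ 1 ≤ 1 := (CStarAlgebra.norm_le_one_iff_of_nonneg _ (ψ.map_nonneg zero_le_one)).mp
    ((N.ψ_contr i 1).trans CStarRing.norm_one_le)
  exact φ.comp_apply_mul_star_le ψ hφ hψ z

/-- Let `A` be a unital C*-algebra.  If there are nets of contractive
positive linear maps `φ_α : A → F_α` and `ψ_α : F_α → A` through finite-dimensional
abelian C*-algebras `F_α` with `‖x − ψ_α (φ_α x)‖ → 0` for all `x ∈ A`, then `A` is
abelian. -/
theorem stmt17 (A : Type) [CStarAlgebra A] (h : Nonempty (AbelianApproxNet A)) :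
    ∀ x y : A, x * y = y * x := by
  obtain ⟨N⟩ := h
  let : PartialOrder A := CStarAlgebra.spectralOrder A
  have : StarOrderedRing A := CStarAlgebra.spectralOrderedRing A
  have hnormal (z : A) : IsStarNormal z :=
    ⟨le_antisymm (by simpa using N.mul_star_le_star_mul (star z)) (N.mul_star_le_star_mul z)⟩
  exact commute_of_forall_isStarNormal hnormal

end
end
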